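/- arXiv:2605.14305 — 4 statements merged into one kernel-verified Lean document; each statement's English description precedes it below -/
import Mathlib

section
/- Under a position-wise factorized forward corruption process, the clean token at position i is conditionally independent of the corrupted prefix given the corrupted suffix and the clean prefix. Precisely: for every index i with 1 ≤ i ≤ d, every x_t ∈ V^d and every w ∈ V^{i-1} such that P(X_t = x_t, X_0^{<i} = w) > 0, and every a ∈ V, one has P(X_0^i = a | X_t = x_t, X_0^{<i} = w) = P(X_0^i = a | X_t^{≥ i} = x_t^{≥ i}, X_0^{<i} = w). -/
open scoped Classical

/-- Joint probability mass function of the clean sequence `x0` and the corrupted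
sequence `xt` under a position-wise factorized forward corruption process:
`p(x0, xt) = p0 x0 * ∏ j, q j (xt j | x0 j)`, where `q j u v` is the probability
that position `j` is corrupted to `u` given clean token `v`. -/
noncomputable def jointPMF {V : Type*} [Fintype V] {d : ℕ}
    (p0 : (Fin d → V) → ℝ) (q : Fin d → V → V → ℝ)
    (x0 xt : Fin d → V) : ℝ :=
  p0 x0 * ∏ j, q j (xt j) (x0 j)

/-- Probability of an event `A` on the pair `(X_0, X_t)`. -/
noncomputable def Pr {V : Type*} [Fintype V] {d : ℕ}
    (p0 : (Fin d → V) → ℝ) (q : Fin d → V → V → ℝ)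
    (A : (Fin d → V) → (Fin d → V) → Prop) : ℝ :=
  ∑ x0 : Fin d → V, ∑ xt : Fin d → V,
    if A x0 xt then jointPMF p0 q x0 xt else 0


/-!
Given the clean sequence, the corrupted tokens are independent across positions. Once the clean
prefix is pinned to `w`, the likelihood of the corrupted prefix `x_t^{<i}` is therefore the constant
`∏_{j<i} q_j(x_t^j | w^j)`, so observing all of `x_t` instead of its suffix multiplies numerator and
denominator of the conditional probability by the same nonzero factor. Summing out unobserved
corrupted tokens costs nothing because each `q_j(· | v)` has total mass one.
-/

open Finset

section

variable {V : Type*} [Fintype V] {d : ℕ} {p0 : (Fin d → V) → ℝ} {q : Fin d → V → V → ℝ}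

lemma sum_observed_prod_eq_prod (hqsum : ∀ j v, ∑ u, q j u v = 1) (S : Finset (Fin d))
    (xt y0 : Fin d → V) :
    ∑ yt : Fin d → V, (if ∀ j ∈ S, yt j = xt j then ∏ j, q j (yt j) (y0 j) else 0) =
      ∏ j ∈ S, q j (xt j) (y0 j) := by
  have hind : ∀ yt : Fin d → V,
      (if ∀ j ∈ S, yt j = xt j then ∏ j, q j (yt j) (y0 j) else 0) =
        ∏ j, if j ∈ S → yt j = xt j then q j (yt j) (y0 j) else 0 := fun yt => by
    rw [Fintype.prod_ite_zero]; congr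
  rw [sum_congr rfl fun yt _ => hind yt, ← Fintype.prod_sum (κ := fun _ => V)
    fun j v => if j ∈ S → v = xt j then q j v (y0 j) else 0,
    ← univ_inter S, ← prod_ite_mem]
  refine prod_congr rfl fun j _ => ?_
  by_cases hj : j ∈ S
  · simp [hj]
  · simp [hj, hqsum]

lemma Pr_observed_and_eq_sum (hqsum : ∀ j v, ∑ u, q j u v = 1) (S : Finset (Fin d))
    (xt : Fin d → V) (P : (Fin d → V) → Prop) :
    Pr p0 q (fun y0 yt => (∀ j ∈ S, yt j = xt j) ∧ P y0) =
      ∑ y0 with P y0, p0 y0 * ∏ j ∈ S, q j (xt j) (y0 j) := by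
  rw [Pr, sum_filter]
  refine sum_congr rfl fun y0 _ => ?_
  split_ifs with hP
  · simp only [hP, and_true, jointPMF, ← sum_observed_prod_eq_prod hqsum S xt y0, mul_sum,
      mul_ite, mul_zero]
  · simp [hP]

lemma exists_of_Pr_ne_zero {A : (Fin d → V) → (Fin d → V) → Prop} (h : Pr p0 q A ≠ 0) :
    ∃ y0 yt, A y0 yt := by
  obtain ⟨y0, -, h⟩ := exists_ne_zero_of_sum_ne_zero h
  obtain ⟨yt, -, h⟩ := exists_ne_zero_of_sum_ne_zero h
  exact ⟨y0, yt, of_not_not fun hA => h (if_neg hA)⟩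

lemma Pr_observed_and_eq_mul_of_subset (hqsum : ∀ j v, ∑ u, q j u v = 1)
    {S T : Finset (Fin d)} (hST : S ⊆ T) (xt z : Fin d → V) {P : (Fin d → V) → Prop}
    (hP : ∀ y0, P y0 → ∀ j ∈ T \ S, y0 j = z j) :
    Pr p0 q (fun y0 yt => (∀ j ∈ T, yt j = xt j) ∧ P y0) =
      (∏ j ∈ T \ S, q j (xt j) (z j)) *
        Pr p0 q (fun y0 yt => (∀ j ∈ S, yt j = xt j) ∧ P y0) := by
  rw [Pr_observed_and_eq_sum hqsum, Pr_observed_and_eq_sum hqsum, mul_sum]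
  refine sum_congr rfl fun y0 hy0 => ?_
  rw [← prod_sdiff hST, prod_congr rfl fun j hj => by rw [hP y0 (mem_filter.1 hy0).2 j hj]]
  ring

theorem div_Pr_observed_eq_of_subset (hqsum : ∀ j v, ∑ u, q j u v = 1)
    {S T : Finset (Fin d)} (hST : S ⊆ T) (xt : Fin d → V) {P : (Fin d → V) → Prop}
    (hP : ∀ y0 y0', P y0 → P y0' → ∀ j ∈ T \ S, y0 j = y0' j) (Q : (Fin d → V) → Prop)
    (hpos : Pr p0 q (fun y0 yt => (∀ j ∈ T, yt j = xt j) ∧ P y0) ≠ 0) :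
    Pr p0 q (fun y0 yt => (∀ j ∈ T, yt j = xt j) ∧ Q y0 ∧ P y0) /
        Pr p0 q (fun y0 yt => (∀ j ∈ T, yt j = xt j) ∧ P y0) =
      Pr p0 q (fun y0 yt => (∀ j ∈ S, yt j = xt j) ∧ Q y0 ∧ P y0) /
        Pr p0 q (fun y0 yt => (∀ j ∈ S, yt j = xt j) ∧ P y0) := by
  obtain ⟨z, -, -, hz⟩ := exists_of_Pr_ne_zero hpos
  have hfix : ∀ y0, P y0 → ∀ j ∈ T \ S, y0 j = z j := fun y0 hy0 => hP y0 z hy0 hz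
  rw [Pr_observed_and_eq_mul_of_subset hqsum hST xt z hfix] at hpos ⊢
  rw [Pr_observed_and_eq_mul_of_subset hqsum hST xt z fun y0 hy0 => hfix y0 hy0.2,
    mul_div_mul_left _ _ (left_ne_zero_of_mul hpos)]

end

theorem clean_token_cond_indep_corrupted_prefix_general
    {V : Type*} [Fintype V] {d : ℕ}
    (p0 : (Fin d → V) → ℝ) (q : Fin d → V → V → ℝ)
    (hqsum : ∀ j v, ∑ u, q j u v = 1)
    (i : Fin d) (xt : Fin d → V) (w : Fin (i : ℕ) → V) (a : V)
    (hpos : 0 < Pr p0 q (fun y0 yt => yt = xt ∧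
      ∀ j : Fin d, (hj : (j : ℕ) < (i : ℕ)) → y0 j = w ⟨j, hj⟩)) :
    Pr p0 q (fun y0 yt => y0 i = a ∧ yt = xt ∧
        ∀ j : Fin d, (hj : (j : ℕ) < (i : ℕ)) → y0 j = w ⟨j, hj⟩) /
      Pr p0 q (fun y0 yt => yt = xt ∧
        ∀ j : Fin d, (hj : (j : ℕ) < (i : ℕ)) → y0 j = w ⟨j, hj⟩)
    =
    Pr p0 q (fun y0 yt => y0 i = a ∧ (∀ j : Fin d, i ≤ j → yt j = xt j) ∧
        ∀ j : Fin d, (hj : (j : ℕ) < (i : ℕ)) → y0 j = w ⟨j, hj⟩) /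
      Pr p0 q (fun y0 yt => (∀ j : Fin d, i ≤ j → yt j = xt j) ∧
        ∀ j : Fin d, (hj : (j : ℕ) < (i : ℕ)) → y0 j = w ⟨j, hj⟩) := by
  have hprefix_fixed : ∀ y0 y0' : Fin d → V,
      (∀ j : Fin d, (hj : (j : ℕ) < (i : ℕ)) → y0 j = w ⟨j, hj⟩) →
      (∀ j : Fin d, (hj : (j : ℕ) < (i : ℕ)) → y0' j = w ⟨j, hj⟩) →
      ∀ j ∈ univ \ Ici i, y0 j = y0' j := by
    intro y0 y0' h h' j hj
    have hji : (j : ℕ) < i := by simpa using hj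
    rw [h j hji, h' j hji]
  have key := div_Pr_observed_eq_of_subset hqsum (subset_univ (Ici i)) xt hprefix_fixed
    (· i = a) (by simpa [← funext_iff] using hpos.ne')
  simpa [← funext_iff, and_left_comm] using key

/-- Under a position-wise factorized forward corruption process,
the clean token at position `i` is conditionally independent of the corrupted
prefix given the corrupted suffix and the clean prefix:
`P(X_0^i = a | X_t = x_t, X_0^{<i} = w) = P(X_0^i = a | X_t^{≥i} = x_t^{≥i}, X_0^{<i} = w)`. -/
theorem clean_token_cond_indep_corrupted_prefix
    {V : Type*} [Fintype V] [Nonempty V] {d : ℕ} (hd : 0 < d)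
    (p0 : (Fin d → V) → ℝ) (q : Fin d → V → V → ℝ)
    (hp0 : ∀ x, 0 ≤ p0 x) (hp0sum : ∑ x, p0 x = 1)
    (hq : ∀ j v u, 0 ≤ q j u v) (hqsum : ∀ j v, ∑ u, q j u v = 1)
    (i : Fin d) (xt : Fin d → V) (w : Fin (i : ℕ) → V) (a : V)
    (hpos : 0 < Pr p0 q (fun y0 yt => yt = xt ∧
      ∀ j : Fin d, (hj : (j : ℕ) < (i : ℕ)) → y0 j = w ⟨j, hj⟩)) :
    Pr p0 q (fun y0 yt => y0 i = a ∧ yt = xt ∧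
        ∀ j : Fin d, (hj : (j : ℕ) < (i : ℕ)) → y0 j = w ⟨j, hj⟩) /
      Pr p0 q (fun y0 yt => yt = xt ∧
        ∀ j : Fin d, (hj : (j : ℕ) < (i : ℕ)) → y0 j = w ⟨j, hj⟩)
    =
    Pr p0 q (fun y0 yt => y0 i = a ∧ (∀ j : Fin d, i ≤ j → yt j = xt j) ∧
        ∀ j : Fin d, (hj : (j : ℕ) < (i : ℕ)) → y0 j = w ⟨j, hj⟩) /
      Pr p0 q (fun y0 yt => (∀ j : Fin d, i ≤ j → yt j = xt j) ∧
        ∀ j : Fin d, (hj : (j : ℕ) < (i : ℕ)) → y0 j = w ⟨j, hj⟩) :=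
  clean_token_cond_indep_corrupted_prefix_general p0 q hqsum i xt w a hpos
end

section
/- Under a position-wise factorized forward corruption process with strictly positive p_0 and strictly positive corruption kernels q_j, the prefix-conditioned clean-token posterior satisfies the proportionality identity of Lemma 1: for every index i with 1 ≤ i ≤ d, every x_t ∈ V^d and every w ∈ V^{i-1}, there exists a constant c > 0 (depending on x_t, w, and i but not on a) such that for all a ∈ V, P(X_0^i = a | X_t = x_t, X_0^{<i} = w) = c · P(X_0^i = a | X_t = x_t) · P(X_0^i = a | X_t^{>i} = x_t^{>i}, X_0^{<i} = w) / P(X_0^i = a | X_t^{-i} = x_t^{-i}). -/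
open scoped Classical

/-!
Summing out the corrupted coordinates that are not observed turns every probability in the
statement into a mass `∑_{x₀ ∈ Q} p₀ x₀ ∏_{j ∈ S} q_j(x_t^j | x₀^j)`, where `S` is the set of
observed coordinates. On the event `{X₀^i = a, X₀^{<i} = w}` the factors with `j ≤ i` are the
constants `q_i(x_t^i | a) ∏_{j<i} q_j(x_t^j | w_j)`, and on `{X₀^i = a}` the factor `j = i` is
`q_i(x_t^i | a)`. So `q_i(x_t^i | a)` cancels between the first and the third ratio, and all that
remains is independent of `a`.
-/

open Finset

theorem Fintype.sum_ite_eqOn_prod {ι κ R : Type*} [Fintype ι] [DecidableEq ι] [Fintype κ]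
    [CommSemiring R] (f : ι → κ → R) (hf : ∀ j, ∑ u, f j u = 1) (S : Finset ι) (x : ι → κ) :
    ∑ y : ι → κ, (if ∀ j ∈ S, y j = x j then ∏ j, f j (y j) else 0) = ∏ j ∈ S, f j (x j) := by
  -- the indicator factorizes over coordinates, turning the sum into a product of sums over `κ`
  set g : ι → κ → R := fun j u => if j ∈ S then (if u = x j then f j u else 0) else f j u
  have hg : ∀ y : ι → κ,
      (if ∀ j ∈ S, y j = x j then ∏ j, f j (y j) else 0) = ∏ j, g j (y j) := by
    intro y
    split_ifs with hy
    · refine Finset.prod_congr rfl fun j _ => ?_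
      simp only [g]
      split_ifs <;> simp_all
    · push Not at hy
      obtain ⟨j, hjS, hjx⟩ := hy
      exact (prod_eq_zero (mem_univ j) (by simp [g, hjS, hjx])).symm
  have hg_sum : ∀ j, ∑ u, g j u = if j ∈ S then f j (x j) else 1 := by
    intro j
    by_cases hj : j ∈ S <;> simp [g, hj, hf]
  simp_rw [hg, ← Fintype.prod_sum, hg_sum, Fintype.prod_ite_mem]

section Corruption

variable {V : Type*} [Fintype V] {d : ℕ} (p0 : (Fin d → V) → ℝ) (q : Fin d → V → V → ℝ)

noncomputable def marginalMass (xt : Fin d → V) (Q : (Fin d → V) → Prop) (S : Finset (Fin d)) :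
    ℝ :=
  ∑ y0, if Q y0 then p0 y0 * ∏ j ∈ S, q j (xt j) (y0 j) else 0

variable {p0 q}

theorem Pr_eq_marginalMass (hqsum : ∀ j v, ∑ u, q j u v = 1) {xt : Fin d → V}
    {A : (Fin d → V) → (Fin d → V) → Prop} {Q : (Fin d → V) → Prop} {S : Finset (Fin d)}
    (hA : ∀ y0 yt, A y0 yt ↔ Q y0 ∧ ∀ j ∈ S, yt j = xt j) :
    Pr p0 q A = marginalMass p0 q xt Q S := by
  refine sum_congr rfl fun y0 _ => ?_
  simp only [hA, jointPMF]
  split_ifs with hQ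
  · simp only [hQ, true_and]
    rw [← Fintype.sum_ite_eqOn_prod (fun j u => q j u (y0 j)) (fun j => hqsum j (y0 j)), mul_sum]
    simp only [mul_ite, mul_zero]
  · exact sum_eq_zero fun yt _ => if_neg fun h => hQ h.1

theorem marginalMass_pos (hp0 : ∀ x, 0 < p0 x) (hq : ∀ j v u, 0 < q j u v) (xt : Fin d → V)
    {Q : (Fin d → V) → Prop} (hQ : ∃ y, Q y) (S : Finset (Fin d)) :
    0 < marginalMass p0 q xt Q S := by
  obtain ⟨y, hy⟩ := hQ
  have hterm : ∀ y0, Q y0 → 0 < p0 y0 * ∏ j ∈ S, q j (xt j) (y0 j) := fun y0 _ =>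
    mul_pos (hp0 y0) (prod_pos fun j _ => hq _ _ _)
  refine sum_pos' (fun y0 _ => ?_) ⟨y, mem_univ y, by simpa [hy] using hterm y hy⟩
  split_ifs with h
  exacts [(hterm y0 h).le, le_rfl]

theorem marginalMass_union_of_eqOn {xt : Fin d → V} {Q : (Fin d → V) → Prop}
    {S T : Finset (Fin d)} (hST : Disjoint S T) {z : Fin d → V}
    (hQ : ∀ y, Q y → ∀ j ∈ T, y j = z j) :
    marginalMass p0 q xt Q (S ∪ T) = (∏ j ∈ T, q j (xt j) (z j)) * marginalMass p0 q xt Q S := by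
  rw [marginalMass, marginalMass, mul_sum]
  refine sum_congr rfl fun y _ => ?_
  split_ifs with hy
  · have hT : ∏ j ∈ T, q j (xt j) (y j) = ∏ j ∈ T, q j (xt j) (z j) :=
      Finset.prod_congr rfl fun j hj => by rw [hQ y hy j hj]
    rw [prod_union hST, hT]
    ring
  · rw [mul_zero]

end Corruption

section Prefix

variable {V : Type*} {d : ℕ} {i : Fin d}

abbrev HasPrefix (w : Fin (i : ℕ) → V) (y : Fin d → V) : Prop :=
  ∀ j : Fin d, (hj : (j : ℕ) < (i : ℕ)) → y j = w ⟨j, hj⟩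

def extendPrefix (w : Fin (i : ℕ) → V) (b : V) : Fin d → V :=
  fun j => if hj : (j : ℕ) < (i : ℕ) then w ⟨j, hj⟩ else b

theorem hasPrefix_extendPrefix (w : Fin (i : ℕ) → V) (b : V) : HasPrefix w (extendPrefix w b) :=
  fun j hj => by simp [extendPrefix, hj]

theorem HasPrefix.eqOn_Iio {w : Fin (i : ℕ) → V} {y : Fin d → V} (h : HasPrefix w y) (b : V) :
    ∀ j ∈ Iio i, y j = extendPrefix w b j :=
  fun j hj => by
    have hj' : (j : ℕ) < i := by simpa using hj
    simp [extendPrefix, hj', h j hj']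

end Prefix

section Proportionality

variable {V : Type*} [Fintype V] {d : ℕ} {p0 : (Fin d → V) → ℝ} {q : Fin d → V → V → ℝ}

theorem marginalMass_univ_of_eq_at {i : Fin d} {xt : Fin d → V} {Q : (Fin d → V) → Prop} {a : V}
    (hQ : ∀ y, Q y → y i = a) :
    marginalMass p0 q xt Q univ = q i (xt i) a * marginalMass p0 q xt Q (univ.erase i) := by
  have hsplit : (univ : Finset (Fin d)) = univ.erase i ∪ {i} := by ext; simp
  conv_lhs => rw [hsplit]
  rw [marginalMass_union_of_eqOn (z := fun _ => a) (by simp) (by simpa using hQ),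
    prod_singleton]

theorem marginalMass_univ_of_eq_at_of_hasPrefix {i : Fin d} {xt : Fin d → V}
    {Q : (Fin d → V) → Prop} {w : Fin (i : ℕ) → V} {a : V}
    (hQ : ∀ y, Q y → y i = a ∧ HasPrefix w y) (b : V) :
    marginalMass p0 q xt Q univ = (∏ j ∈ Iio i, q j (xt j) (extendPrefix w b j)) *
      (q i (xt i) a * marginalMass p0 q xt Q (Ioi i)) := by
  have hsplit : (univ : Finset (Fin d)) = (Ioi i ∪ {i}) ∪ Iio i := by
    ext j; simp only [mem_union, mem_Ioi, mem_singleton, mem_Iio, mem_univ, true_iff]; omega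
  have hdisj : Disjoint (Ioi i ∪ {i}) (Iio i) := by
    simp only [disjoint_left, mem_union, mem_Ioi, mem_singleton, mem_Iio]
    intro j
    omega
  conv_lhs => rw [hsplit]
  rw [marginalMass_union_of_eqOn hdisj fun y hy => (hQ y hy).2.eqOn_Iio b,
    marginalMass_union_of_eqOn (z := fun _ => a) (by simp) (by simpa using fun y hy => (hQ y hy).1),
    prod_singleton]

theorem marginalMass_prefix_proportionality (hp0 : ∀ x, 0 < p0 x) (hq : ∀ j v u, 0 < q j u v)
    (i : Fin d) (xt : Fin d → V) (w : Fin (i : ℕ) → V) :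
    ∃ c : ℝ, 0 < c ∧ ∀ a : V,
      marginalMass p0 q xt (fun y => y i = a ∧ HasPrefix w y) univ /
          marginalMass p0 q xt (HasPrefix w) univ =
        c * (marginalMass p0 q xt (· i = a) univ / marginalMass p0 q xt (fun _ => True) univ) *
          (marginalMass p0 q xt (fun y => y i = a ∧ HasPrefix w y) (Ioi i) /
            marginalMass p0 q xt (HasPrefix w) (Ioi i)) /
          (marginalMass p0 q xt (· i = a) (univ.erase i) /
            marginalMass p0 q xt (fun _ => True) (univ.erase i)) := by
  set K := ∏ j ∈ Iio i, q j (xt j) (extendPrefix w (xt i) j) with hK_def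
  have hK : 0 < K := prod_pos fun j _ => hq _ _ _
  have hM : ∀ {Q : (Fin d → V) → Prop} (S), (∃ y, Q y) → 0 < marginalMass p0 q xt Q S :=
    fun S hQ => marginalMass_pos hp0 hq xt hQ S
  have hB := hM univ ⟨_, hasPrefix_extendPrefix w (xt i)⟩
  have hF := hM (Ioi i) ⟨_, hasPrefix_extendPrefix w (xt i)⟩
  have hD := hM (Q := fun _ => True) univ ⟨xt, trivial⟩
  have hH := hM (Q := fun _ => True) (univ.erase i) ⟨xt, trivial⟩
  refine ⟨K * marginalMass p0 q xt (fun _ => True) univ *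
      marginalMass p0 q xt (HasPrefix w) (Ioi i) /
      (marginalMass p0 q xt (HasPrefix w) univ *
        marginalMass p0 q xt (fun _ => True) (univ.erase i)),
    div_pos (mul_pos (mul_pos hK hD) hF) (mul_pos hB hH), fun a => ?_⟩
  have hG := hM (Q := (· i = a)) (univ.erase i) ⟨fun _ => a, rfl⟩
  rw [marginalMass_univ_of_eq_at_of_hasPrefix (fun _ => id) (xt i),
    marginalMass_univ_of_eq_at fun _ => id, ← hK_def]
  field_simp

end Proportionality

theorem prefix_conditioned_posterior_proportionality_general
    {V : Type*} [Fintype V] {d : ℕ}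
    (p0 : (Fin d → V) → ℝ) (q : Fin d → V → V → ℝ)
    (hp0 : ∀ x, 0 < p0 x)
    (hq : ∀ j v u, 0 < q j u v) (hqsum : ∀ j v, ∑ u, q j u v = 1)
    (i : Fin d) (xt : Fin d → V) (w : Fin (i : ℕ) → V) :
    ∃ c : ℝ, 0 < c ∧ ∀ a : V,
      Pr p0 q (fun y0 yt => y0 i = a ∧ yt = xt ∧
          ∀ j : Fin d, (hj : (j : ℕ) < (i : ℕ)) → y0 j = w ⟨j, hj⟩) /
        Pr p0 q (fun y0 yt => yt = xt ∧
          ∀ j : Fin d, (hj : (j : ℕ) < (i : ℕ)) → y0 j = w ⟨j, hj⟩)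
      =
      c *
        (Pr p0 q (fun y0 yt => y0 i = a ∧ yt = xt) /
          Pr p0 q (fun _ yt => yt = xt)) *
        (Pr p0 q (fun y0 yt => y0 i = a ∧ (∀ j : Fin d, i < j → yt j = xt j) ∧
            ∀ j : Fin d, (hj : (j : ℕ) < (i : ℕ)) → y0 j = w ⟨j, hj⟩) /
          Pr p0 q (fun y0 yt => (∀ j : Fin d, i < j → yt j = xt j) ∧
            ∀ j : Fin d, (hj : (j : ℕ) < (i : ℕ)) → y0 j = w ⟨j, hj⟩)) /
        (Pr p0 q (fun y0 yt => y0 i = a ∧ ∀ j : Fin d, j ≠ i → yt j = xt j) /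
          Pr p0 q (fun _ yt => ∀ j : Fin d, j ≠ i → yt j = xt j)) := by
  obtain ⟨c, hc, hprop⟩ := marginalMass_prefix_proportionality hp0 hq i xt w
  refine ⟨c, hc, fun a => ?_⟩
  convert hprop a using 5 <;>
    exact Pr_eq_marginalMass hqsum fun _ _ => by simp [funext_iff] <;> tauto

/-- Lemma 1: Under a position-wise factorized forward corruption
process with strictly positive `p0` and strictly positive corruption kernels,
there is a constant `c > 0` (independent of `a`) such that for all `a`,
`P(X_0^i = a | X_t = x_t, X_0^{<i} = w)
  = c * P(X_0^i = a | X_t = x_t)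
      * P(X_0^i = a | X_t^{>i} = x_t^{>i}, X_0^{<i} = w)
      / P(X_0^i = a | X_t^{-i} = x_t^{-i})`. -/
theorem prefix_conditioned_posterior_proportionality
    {V : Type*} [Fintype V] [Nonempty V] {d : ℕ} (hd : 0 < d)
    (p0 : (Fin d → V) → ℝ) (q : Fin d → V → V → ℝ)
    (hp0 : ∀ x, 0 < p0 x) (hp0sum : ∑ x, p0 x = 1)
    (hq : ∀ j v u, 0 < q j u v) (hqsum : ∀ j v, ∑ u, q j u v = 1)
    (i : Fin d) (xt : Fin d → V) (w : Fin (i : ℕ) → V) :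
    ∃ c : ℝ, 0 < c ∧ ∀ a : V,
      Pr p0 q (fun y0 yt => y0 i = a ∧ yt = xt ∧
          ∀ j : Fin d, (hj : (j : ℕ) < (i : ℕ)) → y0 j = w ⟨j, hj⟩) /
        Pr p0 q (fun y0 yt => yt = xt ∧
          ∀ j : Fin d, (hj : (j : ℕ) < (i : ℕ)) → y0 j = w ⟨j, hj⟩)
      =
      c *
        (Pr p0 q (fun y0 yt => y0 i = a ∧ yt = xt) /
          Pr p0 q (fun _ yt => yt = xt)) *
        (Pr p0 q (fun y0 yt => y0 i = a ∧ (∀ j : Fin d, i < j → yt j = xt j) ∧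
            ∀ j : Fin d, (hj : (j : ℕ) < (i : ℕ)) → y0 j = w ⟨j, hj⟩) /
          Pr p0 q (fun y0 yt => (∀ j : Fin d, i < j → yt j = xt j) ∧
            ∀ j : Fin d, (hj : (j : ℕ) < (i : ℕ)) → y0 j = w ⟨j, hj⟩)) /
        (Pr p0 q (fun y0 yt => y0 i = a ∧ ∀ j : Fin d, j ≠ i → yt j = xt j) /
          Pr p0 q (fun _ yt => ∀ j : Fin d, j ≠ i → yt j = xt j)) :=
  prefix_conditioned_posterior_proportionality_general p0 q hp0 hq hqsum i xt w
end

section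
/- One speculative accept–reject step with residual correction commits a token whose law is exactly the target distribution: for probability mass functions π and ρ on a finite vocabulary V, with r = 1 − ∑_{z ∈ V} min(π(z), ρ(z)), the committed law κ defined by κ(x) = min(π(x), ρ(x)) + r · π'(x) when r > 0 (where π'(x) = max(π(x) − ρ(x), 0)/r), and κ(x) = min(π(x), ρ(x)) when r = 0, satisfies κ(x) = π(x) for all x ∈ V. In particular, for every x with ρ(x) > 0, the accepted mass ρ(x) · min(1, π(x)/ρ(x)) equals min(π(x), ρ(x)). -/
/-!
Accepted mass plus residual mass at `x` is `min (π x) (ρ x) + max (π x - ρ x) 0 = π x`; the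
normalisation by the rejection probability `r` cancels when `r ≠ 0`. When `r = 0` the pointwise
inequality `min (π x) (ρ x) ≤ π x` is an equality of sums, hence an equality at every `x`.
-/

open Finset

theorem min_add_max_sub_zero {α : Type*} [AddCommGroup α] [LinearOrder α] [IsOrderedAddMonoid α]
    (a b : α) : min a b + max (a - b) 0 = a := by
  rcases le_total a b with hab | hab
  · rw [min_eq_left hab, max_eq_right (sub_nonpos.mpr hab), add_zero]
  · rw [min_eq_right hab, max_eq_left (sub_nonneg.mpr hab), add_sub_cancel]

theorem min_add_mul_max_sub_zero_div {𝕜 : Type*} [Field 𝕜] [LinearOrder 𝕜]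
    [IsStrictOrderedRing 𝕜] (a b : 𝕜) {r : 𝕜} (hr : r ≠ 0) :
    min a b + r * (max (a - b) 0 / r) = a := by
  rw [mul_div_cancel₀ _ hr, min_add_max_sub_zero]

theorem min_eq_of_sum_min_eq_sum {ι M : Type*} [Fintype ι] [AddCommMonoid M] [LinearOrder M]
    [IsOrderedCancelAddMonoid M] (f g : ι → M)
    (h : ∑ z, min (f z) (g z) = ∑ z, f z) (x : ι) : min (f x) (g x) = f x :=
  (sum_eq_sum_iff_of_le fun z _ ↦ min_le_left (f z) (g z)).mp h x (mem_univ x)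

theorem mul_min_one_div {𝕜 : Type*} [Field 𝕜] [LinearOrder 𝕜] [IsStrictOrderedRing 𝕜]
    (a : 𝕜) {b : 𝕜} (hb : 0 < b) : b * min 1 (a / b) = min a b := by
  rw [mul_min_of_nonneg _ _ hb.le, mul_one, mul_div_cancel₀ _ hb.ne', min_comm]

theorem speculative_step_exact_law_general {V : Type*} [Fintype V]
    (π ρ : V → ℝ)
    (hπ1 : ∑ x, π x = 1) :
    (∀ x,
      (if 1 - ∑ z, min (π z) (ρ z) = 0 then min (π x) (ρ x)
       else min (π x) (ρ x) +
         (1 - ∑ z, min (π z) (ρ z)) *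
           (max (π x - ρ x) 0 / (1 - ∑ z, min (π z) (ρ z)))) = π x) ∧
    (∀ x, 0 < ρ x → ρ x * min 1 (π x / ρ x) = min (π x) (ρ x)) := by
  refine ⟨fun x ↦ ?_, fun x hx ↦ mul_min_one_div (π x) hx⟩
  split_ifs with hr
  · exact min_eq_of_sum_min_eq_sum π ρ (by linarith) x
  · exact min_add_mul_max_sub_zero_div (π x) (ρ x) hr

/-- One speculative accept–reject step with residual correction
commits a token whose law is exactly the target distribution; in particular,
for every `x` with `ρ x > 0`, the accepted mass `ρ x * min 1 (π x / ρ x)`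
equals `min (π x) (ρ x)`. -/
theorem speculative_step_exact_law {V : Type*} [Fintype V] [Nonempty V]
    (π ρ : V → ℝ)
    (hπ0 : ∀ x, 0 ≤ π x) (hρ0 : ∀ x, 0 ≤ ρ x)
    (hπ1 : ∑ x, π x = 1) (hρ1 : ∑ x, ρ x = 1) :
    (∀ x,
      (if 1 - ∑ z, min (π z) (ρ z) = 0 then min (π x) (ρ x)
       else min (π x) (ρ x) +
         (1 - ∑ z, min (π z) (ρ z)) *
           (max (π x - ρ x) 0 / (1 - ∑ z, min (π z) (ρ z)))) = π x) ∧
    (∀ x, 0 < ρ x → ρ x * min 1 (π x / ρ x) = min (π x) (ρ x)) :=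
  speculative_step_exact_law_general π ρ hπ1
end

section
/- Conditional correctness under resampling (Corollary 1): let p* be a strictly positive probability mass function on V^d, let R = {r_1 < r_2 < … < r_L} ⊆ {1,…,d} be a set of positions selected for resampling, and fix values y ∈ V^{d-L} for the coordinates outside R. For each m ∈ {1,…,L} and each partial assignment w ∈ V^{m-1} of the earlier resampled positions r_1,…,r_{m-1}, let π_m(· | w) be the conditional law under p* of the coordinate at r_m given that the coordinates at r_1,…,r_{m-1} equal w and the coordinates outside R equal y, and let ρ_m(· | w) be an arbitrary probability mass function on V. Define the committed kernels κ_m from (π_m, ρ_m) by the speculative accept–reject–residual rule. Then for every x_R ∈ V^L, ∏_{m=1}^{L} κ_m(x^{r_m} | x^{r_1},…,x^{r_{m-1}}) = p*(X_R = x_R | X_{R^c} = y), i.e., the regenerated coordinates have exactly the oracle conditional joint law given the fixed coordinates. -/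
open scoped Classical

/-- The law of the token committed by one speculative accept–reject step with
target `π` and draft `ρ`: a draft token `a ~ ρ` is accepted with probability
`min 1 (π a / ρ a)` (accepted mass `min (π a) (ρ a)`); upon rejection
(probability `r = 1 - ∑ z, min (π z) (ρ z)`), a corrected token is sampled from
the residual distribution `π' a = max (π a - ρ a) 0 / r`. -/
noncomputable def committedKernel {V : Type*} [Fintype V] (π ρ : V → ℝ) (a : V) : ℝ :=
  if 1 - ∑ z, min (π z) (ρ z) = 0 then min (π a) (ρ a)
  else min (π a) (ρ a) +
    (1 - ∑ z, min (π z) (ρ z)) *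
      (max (π a - ρ a) 0 / (1 - ∑ z, min (π z) (ρ z)))

/-- Oracle conditional law at the `m`-th resampled position: the conditional
law under `pstar` of the coordinate `r m`, given that the earlier resampled
coordinates `r 0, …, r (m-1)` equal `w` and the coordinates outside the range
of `r` equal `y`. -/
noncomputable def resampleCond {V : Type*} [Fintype V] {d L : ℕ}
    (pstar : (Fin d → V) → ℝ) (r : Fin L → Fin d)
    (y : {j : Fin d // j ∉ Set.range r} → V)
    (m : Fin L) (w : Fin (m : ℕ) → V) (a : V) : ℝ :=
  (∑ x : Fin d → V,
      if (∀ j : Fin d, (hj : j ∉ Set.range r) → x j = y ⟨j, hj⟩) ∧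
         (∀ t : Fin L, (ht : (t : ℕ) < (m : ℕ)) → x (r t) = w ⟨t, ht⟩) ∧
         x (r m) = a
      then pstar x else 0) /
  (∑ x : Fin d → V,
      if (∀ j : Fin d, (hj : j ∉ Set.range r) → x j = y ⟨j, hj⟩) ∧
         (∀ t : Fin L, (ht : (t : ℕ) < (m : ℕ)) → x (r t) = w ⟨t, ht⟩)
      then pstar x else 0)

/-!
Whenever the target `π` sums to one, the accept–reject–residual step commits a token with law
exactly `π`, whatever the draft: the accepted mass `min π ρ` plus the rejection probability times
the residual recovers `π` pointwise. So the `m`-th factor is the oracle conditional `π_m`, i.e. the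
ratio of the `p*`-masses of configurations agreeing with `y` off `R` and with `x_R` on the first
`m + 1`, resp. `m`, resampled positions. These masses are positive (`p* > 0` and `r` is injective),
so the product telescopes to the ratio of the masses for `L` and `0` positions, which is the
conditional law `P(X_R = x_R | X_{R^c} = y)`.
-/

open Finset

lemma committedKernel_eq_of_sum_eq_one {V : Type*} [Fintype V] (π ρ : V → ℝ)
    (hπ : ∑ a, π a = 1) : committedKernel π ρ = π := by
  funext a
  unfold committedKernel
  split_ifs with hr
  · -- no rejection mass: the accepted masses `min (π z) (ρ z) ≤ π z` already sum to `1 = ∑ π`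
    have hle : ∀ z ∈ univ, min (π z) (ρ z) ≤ π z := fun z _ => min_le_left _ _
    exact (sum_eq_sum_iff_of_le hle).mp (by linarith) a (mem_univ a)
  · rcases le_total (π a) (ρ a) with hle | hle
    · simp [min_eq_left hle, max_eq_right (sub_nonpos.mpr hle)]
    · rw [min_eq_right hle, max_eq_left (sub_nonneg.mpr hle), mul_div_cancel₀ _ hr]
      ring

lemma prod_range_div_of_ne_zero {K : Type*} [Field K] (f : ℕ → K) (hf : ∀ k, f k ≠ 0)
    (n : ℕ) : ∏ i ∈ range n, f (i + 1) / f i = f n / f 0 := by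
  induction n with
  | zero => simp [hf 0]
  | succ n ih =>
    rw [prod_range_succ, ih, div_mul_div_comm, mul_comm (f n)]
    exact mul_div_mul_right _ _ (hf n)

lemma Function.Injective.exists_extend {α β V : Type*} {f : α → β} (hf : Function.Injective f)
    (g : α → V) (e : {b // b ∉ Set.range f} → V) :
    ∃ x : β → V, (∀ b (hb : b ∉ Set.range f), x b = e ⟨b, hb⟩) ∧ ∀ a, x (f a) = g a := by
  refine ⟨fun b => if h : b ∈ Set.range f then g h.choose else e ⟨b, h⟩, fun b hb => ?_, fun a => ?_⟩
  · simp [hb]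
  · have h : f a ∈ Set.range f := ⟨a, rfl⟩
    simp only [dif_pos h, hf h.choose_spec]

section EventMass

variable {Ω V : Type*} [Fintype Ω] [Fintype V] (p : Ω → ℝ)

noncomputable def eventMass (P : Ω → Prop) : ℝ :=
  ∑ x, if P x then p x else 0

noncomputable def condLaw (P : Ω → Prop) (g : Ω → V) (a : V) : ℝ :=
  eventMass p (fun x => P x ∧ g x = a) / eventMass p P

lemma eventMass_congr {P Q : Ω → Prop} (h : ∀ x, P x ↔ Q x) : eventMass p P = eventMass p Q :=
  congrArg _ (funext fun x => propext (h x))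

lemma eventMass_eq_sum_ite (P : Ω → Prop) [DecidablePred P] :
    eventMass p P = ∑ x, if P x then p x else 0 := by
  unfold eventMass
  congr!

lemma eventMass_pos (hp : ∀ x, 0 < p x) {P : Ω → Prop} (h : ∃ x, P x) : 0 < eventMass p P := by
  obtain ⟨x, hx⟩ := h
  refine sum_pos' (fun z _ => ?_) ⟨x, mem_univ x, by simpa [hx] using hp x⟩
  split_ifs
  exacts [(hp z).le, le_rfl]

lemma sum_eventMass_fiber (P : Ω → Prop) (g : Ω → V) :
    ∑ a, eventMass p (fun x => P x ∧ g x = a) = eventMass p P := by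
  unfold eventMass
  rw [sum_comm]
  refine sum_congr rfl fun x _ => ?_
  by_cases hx : P x <;> simp [hx]

lemma sum_condLaw {P : Ω → Prop} (hP : eventMass p P ≠ 0) (g : Ω → V) :
    ∑ a, condLaw p P g a = 1 := by
  simp only [condLaw, ← sum_div, sum_eventMass_fiber, div_self hP]

end EventMass

section Resampling

variable {V : Type*} {d L : ℕ} (r : Fin L → Fin d)
  (y : {j : Fin d // j ∉ Set.range r} → V) (xR : Fin L → V)

def AgreesUpTo (k : ℕ) (x : Fin d → V) : Prop :=
  (∀ j (hj : j ∉ Set.range r), x j = y ⟨j, hj⟩) ∧ ∀ t : Fin L, (t : ℕ) < k → x (r t) = xR t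

lemma agreesUpTo_succ (m : Fin L) (x : Fin d → V) :
    AgreesUpTo r y xR (m + 1) x ↔ AgreesUpTo r y xR m x ∧ x (r m) = xR m := by
  refine ⟨fun ⟨hy, hx⟩ => ⟨⟨hy, fun t ht => hx t (by omega)⟩, hx m (by omega)⟩,
    fun ⟨⟨hy, hx⟩, hm⟩ => ⟨hy, fun t ht => ?_⟩⟩
  rcases Nat.lt_succ_iff_lt_or_eq.mp ht with ht | ht
  · exact hx t ht
  · rwa [Fin.ext ht]

lemma agreesUpTo_zero (x : Fin d → V) :
    AgreesUpTo r y xR 0 x ↔ ∀ j (hj : j ∉ Set.range r), x j = y ⟨j, hj⟩ := by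
  simp [AgreesUpTo]

lemma agreesUpTo_length (x : Fin d → V) :
    AgreesUpTo r y xR L x ↔
      (∀ m, x (r m) = xR m) ∧ ∀ j (hj : j ∉ Set.range r), x j = y ⟨j, hj⟩ := by
  simp [AgreesUpTo, and_comm]

lemma exists_agreesUpTo (hr : Function.Injective r) (k : ℕ) : ∃ x, AgreesUpTo r y xR k x := by
  obtain ⟨x, hy, hx⟩ := hr.exists_extend xR y
  exact ⟨x, hy, fun t _ => hx t⟩

lemma resampleCond_eq_condLaw [Fintype V] (pstar : (Fin d → V) → ℝ) (m : Fin L) :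
    resampleCond pstar r y m (fun t => xR (Fin.castLE m.isLt.le t)) =
      condLaw pstar (AgreesUpTo r y xR m) (fun x => x (r m)) := by
  funext a
  unfold resampleCond condLaw
  rw [eventMass_eq_sum_ite, eventMass_eq_sum_ite]
  congr 1 <;> refine sum_congr rfl fun x _ => if_congr ?_ rfl rfl
  exacts [and_assoc.symm, Iff.rfl]

lemma committedKernel_resampleCond [Fintype V] (pstar : (Fin d → V) → ℝ) (ρ : V → ℝ) (m : Fin L)
    (hmass : eventMass pstar (AgreesUpTo r y xR m) ≠ 0) :
    committedKernel (resampleCond pstar r y m (fun t => xR (Fin.castLE m.isLt.le t))) ρ (xR m) =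
      eventMass pstar (AgreesUpTo r y xR (m + 1)) / eventMass pstar (AgreesUpTo r y xR m) := by
  rw [resampleCond_eq_condLaw, committedKernel_eq_of_sum_eq_one _ _ (sum_condLaw pstar hmass _),
    condLaw, eventMass_congr pstar (agreesUpTo_succ r y xR m)]

end Resampling

theorem resampling_conditional_correctness_general
    {V : Type*} [Fintype V] {d L : ℕ}
    (pstar : (Fin d → V) → ℝ)
    (hpos : ∀ x, 0 < pstar x)
    (r : Fin L → Fin d) (hr : StrictMono r)
    (y : {j : Fin d // j ∉ Set.range r} → V)
    (ρ : (m : Fin L) → (Fin (m : ℕ) → V) → V → ℝ) :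
    ∀ xR : Fin L → V,
      (∏ m : Fin L,
        committedKernel
          (resampleCond pstar r y m (fun t => xR (Fin.castLE m.isLt.le t)))
          (ρ m (fun t => xR (Fin.castLE m.isLt.le t)))
          (xR m))
      =
      (∑ x : Fin d → V,
          if (∀ m : Fin L, x (r m) = xR m) ∧
             (∀ j : Fin d, (hj : j ∉ Set.range r) → x j = y ⟨j, hj⟩)
          then pstar x else 0) /
      (∑ x : Fin d → V,
          if ∀ j : Fin d, (hj : j ∉ Set.range r) → x j = y ⟨j, hj⟩
          then pstar x else 0) := by
  intro xR
  set mass : ℕ → ℝ := fun k => eventMass pstar (AgreesUpTo r y xR k)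
  have hmass : ∀ k, mass k ≠ 0 := fun k =>
    (eventMass_pos pstar hpos (exists_agreesUpTo r y xR hr.injective k)).ne'
  calc _ = ∏ m : Fin L, mass (m + 1) / mass m :=
        prod_congr rfl fun m _ => committedKernel_resampleCond r y xR pstar _ m (hmass m)
    _ = mass L / mass 0 := by
        rw [Fin.prod_univ_eq_prod_range (fun k => mass (k + 1) / mass k),
          prod_range_div_of_ne_zero mass hmass]
    _ = _ := by
        rw [show mass L = _ from eventMass_congr pstar (agreesUpTo_length r y xR),
          show mass 0 = _ from eventMass_congr pstar (agreesUpTo_zero r y xR),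
          eventMass_eq_sum_ite, eventMass_eq_sum_ite]

/-- Corollary 1, Conditional correctness under resampling: for a
set of resampling positions `R = {r 0 < r 1 < … < r (L-1)}` and fixed values
`y` outside `R`, sampling the resampled coordinates left to right from the
committed kernels built from the oracle conditionals `π_m` and arbitrary draft
laws `ρ_m` yields exactly the oracle conditional joint law
`P(X_R = x_R | X_{R^c} = y)`. -/
theorem resampling_conditional_correctness
    {V : Type*} [Fintype V] [Nonempty V] {d L : ℕ} (hd : 0 < d) (hL : 0 < L)
    (pstar : (Fin d → V) → ℝ)
    (hpos : ∀ x, 0 < pstar x) (hsum : ∑ x, pstar x = 1)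
    (r : Fin L → Fin d) (hr : StrictMono r)
    (y : {j : Fin d // j ∉ Set.range r} → V)
    (ρ : (m : Fin L) → (Fin (m : ℕ) → V) → V → ℝ)
    (hρ0 : ∀ m w a, 0 ≤ ρ m w a) (hρ1 : ∀ m w, ∑ a, ρ m w a = 1) :
    ∀ xR : Fin L → V,
      (∏ m : Fin L,
        committedKernel
          (resampleCond pstar r y m (fun t => xR (Fin.castLE m.isLt.le t)))
          (ρ m (fun t => xR (Fin.castLE m.isLt.le t)))
          (xR m))
      =
      (∑ x : Fin d → V,
          if (∀ m : Fin L, x (r m) = xR m) ∧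
             (∀ j : Fin d, (hj : j ∉ Set.range r) → x j = y ⟨j, hj⟩)
          then pstar x else 0) /
      (∑ x : Fin d → V,
          if ∀ j : Fin d, (hj : j ∉ Set.range r) → x j = y ⟨j, hj⟩
          then pstar x else 0) :=
  resampling_conditional_correctness_general pstar hpos r hr y ρ
end
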